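/- arXiv:2405.09540 — 3 statements merged into one kernel-verified Lean document; each statement's English description precedes it below -/
import Mathlib

section
/- Let N ≥ 1, let Q be a real symmetric N×N matrix, q, d ∈ ℝ^N, γ > 0, b, c ∈ ℝ, and assume D := b/γ + ((c/γ − 1)/2)² ≥ 0. Set s₁ := (c/γ−1)/2 − √D, A := [[Q, qᵗ],[q, γ]], v := (d,c), and w := v − 2s₁(q,γ) = (d − 2s₁q, c − 2s₁γ). Then for every α ∈ ℝ, every u ∈ C²(ℝ^{N+1}_+) and every (x,y) ∈ ℝ^{N+1}_+, one has y^{α} Tr(A D²(y^{−s₁}u))(x,y) + y^{α−1} v·∇(y^{−s₁}u)(x,y) − b y^{α−2} (y^{−s₁}u)(x,y) = y^{−s₁} ( y^{α} Tr(A D²u)(x,y) + y^{α−1} w·∇u(x,y) ); moreover the last component of w satisfies c − 2s₁γ = γ(1 + 2√D). -/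
open MeasureTheory Real

noncomputable section

/-- Points of `ℝ^{N+1} = ℝ^N × ℝ`; we write `z = (x, y)` with `x : Fin N → ℝ` and `y : ℝ`. -/
abbrev Pt (N : ℕ) := (Fin N → ℝ) × ℝ

/-- Directional (partial) derivative of `u` at `z` in the direction `v`. -/
def pd {N : ℕ} (v : Pt N) (u : Pt N → ℝ) (z : Pt N) : ℝ := fderiv ℝ u z v

/-- The unit vector in the `i`-th `x`-direction. -/
def ex {N : ℕ} (i : Fin N) : Pt N := (Pi.single i 1, 0)

/-- The unit vector in the `y`-direction. -/
def ey {N : ℕ} : Pt N := (0, 1)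

/-- The `i`-th coordinate direction of `ℝ^{N+1}`, `(x_1, …, x_N, y)`. -/
def bvec {N : ℕ} (i : Fin (N + 1)) : Pt N :=
  if h : (i : ℕ) < N then ex ⟨i, h⟩ else ey

/-- The block matrix `[[Q, qᵗ], [q, γ]]`. -/
def blockA {N : ℕ} (Q : Matrix (Fin N) (Fin N) ℝ) (q : Fin N → ℝ) (γ : ℝ) :
    Matrix (Fin (N + 1)) (Fin (N + 1)) ℝ := Matrix.of fun i j =>
  if hi : (i : ℕ) < N then
    if hj : (j : ℕ) < N then Q ⟨i, hi⟩ ⟨j, hj⟩ else q ⟨i, hi⟩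
  else if hj : (j : ℕ) < N then q ⟨j, hj⟩ else γ

/-- `Tr (A D² u)` at the point `z`: `∑_{i,j} a_{ij} ∂²u/∂z_i∂z_j`. -/
def trHess {N : ℕ} (A : Matrix (Fin (N + 1)) (Fin (N + 1)) ℝ) (u : Pt N → ℝ) (z : Pt N) : ℝ :=
  ∑ i, ∑ j, A i j * pd (bvec i) (pd (bvec j) u) z

/-- The norm of `L^p_m(ℝ^{N+1}_+) = L^p(ℝ^{N+1}_+ ; y^m dx dy)`. -/
def LpmNorm (N : ℕ) (p m : ℝ) (f : Pt N → ℝ) : ℝ :=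
  (∫ z in {z : Pt N | 0 < z.2}, |f z| ^ p * z.2 ^ m) ^ (1 / p)

/-!
Put `s = -s₁`. By the Leibniz rule, multiplication by `y^s` commutes with `∂_{x_i}` and turns
`∂_y` into `∂_y + s/y`. The resulting first-order terms of `Tr(A D²·)` shift the drift `v` by
`2s(q, γ) = -2s₁(q, γ)`, and all zeroth-order terms add up to
`(γ s(s-1) + c s - b) y^{α-2} y^s u`, which vanishes because `s₁` was chosen by the quadratic
formula so that `-s₁` is a root of the indicial polynomial `γ s(s-1) + c s - b`.
-/

section

variable {N : ℕ} {u : Pt N → ℝ} {z : Pt N} (s : ℝ)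

lemma hasFDerivAt_snd_rpow_mul {u' : Pt N →L[ℝ] ℝ} (hz : 0 < z.2) (hu : HasFDerivAt u u' z) :
    HasFDerivAt (fun w : Pt N => w.2 ^ s * u w)
      (z.2 ^ s • u' + (s * z.2 ^ (s - 1) * u z) • ContinuousLinearMap.snd ℝ (Fin N → ℝ) ℝ) z := by
  have hy := (Real.hasDerivAt_rpow_const (x := z.2) (p := s) (Or.inl hz.ne')).comp_hasFDerivAt z
    (hasFDerivAt_snd (𝕜 := ℝ))
  refine (hy.mul hu).congr_fderiv (ContinuousLinearMap.ext fun v => ?_)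
  simp only [Function.comp_apply, add_apply, smul_apply, smul_eq_mul, ContinuousLinearMap.coe_snd']
  ring

lemma pd_snd_rpow_mul (hz : 0 < z.2) (hu : DifferentiableAt ℝ u z) (v : Pt N) :
    pd v (fun w : Pt N => w.2 ^ s * u w) z = z.2 ^ s * (pd v u z + s * v.2 / z.2 * u z) := by
  rw [pd, (hasFDerivAt_snd_rpow_mul s hz hu.hasFDerivAt).fderiv, rpow_sub_one hz.ne']
  simp only [pd, add_apply, smul_apply, smul_eq_mul, ContinuousLinearMap.coe_snd']
  field_simp

lemma isOpen_upperHalfSpace : IsOpen {z : Pt N | 0 < z.2} :=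
  isOpen_lt continuous_const continuous_snd

lemma differentiableAt_pd {U : Set (Pt N)} (hu : ContDiffOn ℝ 2 u U) (hU : IsOpen U) (hz : z ∈ U)
    (v : Pt N) : DifferentiableAt ℝ (pd v u) z :=
  (((hu.contDiffAt (hU.mem_nhds hz)).fderiv_right (m := 1) (by norm_num)).differentiableAt
    (by norm_num)).clm_apply (differentiableAt_const v)

lemma pd_pd_snd_rpow_mul (hu : ContDiffOn ℝ 2 u {z : Pt N | 0 < z.2}) (hz : 0 < z.2)
    (v v' : Pt N) :
    pd v (pd v' (fun w : Pt N => w.2 ^ s * u w)) z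
      = z.2 ^ s * (pd v (pd v' u) z + s / z.2 * (v'.2 * pd v u z + v.2 * pd v' u z)
          + s * (s - 1) / z.2 ^ 2 * v.2 * v'.2 * u z) := by
  have hdu : ∀ w : Pt N, 0 < w.2 → DifferentiableAt ℝ u w := fun w hw =>
    (hu.differentiableOn (by norm_num)).differentiableAt (isOpen_upperHalfSpace.mem_nhds hw)
  have hev : pd v' (fun w : Pt N => w.2 ^ s * u w)
      =ᶠ[nhds z] fun w => w.2 ^ s * pd v' u w + s * v'.2 * (w.2 ^ (s - 1) * u w) := by
    filter_upwards [isOpen_upperHalfSpace.mem_nhds hz] with w hw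
    rw [pd_snd_rpow_mul s hw (hdu w hw), rpow_sub_one hw.ne']
    field_simp
  have hderiv : HasFDerivAt
      (fun w : Pt N => w.2 ^ s * pd v' u w + s * v'.2 * (w.2 ^ (s - 1) * u w)) _ z :=
    (hasFDerivAt_snd_rpow_mul s hz
        (differentiableAt_pd hu isOpen_upperHalfSpace hz v').hasFDerivAt).add
      ((hasFDerivAt_snd_rpow_mul (s - 1) hz (hdu z hz).hasFDerivAt).const_mul (s * v'.2))
  rw [pd, hev.fderiv_eq, hderiv.fderiv]
  simp only [pd, add_apply, smul_apply, smul_eq_mul, ContinuousLinearMap.coe_snd',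
    rpow_sub_one hz.ne']
  field_simp
  ring

@[simp] lemma ex_snd (i : Fin N) : (ex i : Pt N).2 = 0 := rfl

@[simp] lemma ey_snd : (ey : Pt N).2 = 1 := rfl

lemma trHess_blockA (Q : Matrix (Fin N) (Fin N) ℝ) (q : Fin N → ℝ) (γ : ℝ) (f : Pt N → ℝ) :
    trHess (blockA Q q γ) f z
      = ∑ i, ∑ j, Q i j * pd (ex i) (pd (ex j) f) z
        + ∑ i, q i * (pd (ex i) (pd ey f) z + pd ey (pd (ex i) f) z)
        + γ * pd ey (pd ey f) z := by
  simp only [trHess, Fin.sum_univ_castSucc]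
  simp only [blockA, Matrix.of_apply, Fin.val_castSucc, Fin.is_lt, ↓reduceDIte, Fin.eta, bvec,
    Fin.val_last, lt_self_iff_false, Finset.sum_add_distrib, mul_add]
  ring

lemma trHess_blockA_snd_rpow_mul (Q : Matrix (Fin N) (Fin N) ℝ) (q : Fin N → ℝ) (γ : ℝ)
    (hu : ContDiffOn ℝ 2 u {z : Pt N | 0 < z.2}) (hz : 0 < z.2) :
    trHess (blockA Q q γ) (fun w : Pt N => w.2 ^ s * u w) z
      = z.2 ^ s * (trHess (blockA Q q γ) u z
          + 2 * s / z.2 * (∑ i, q i * pd (ex i) u z + γ * pd ey u z)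
          + γ * s * (s - 1) / z.2 ^ 2 * u z) := by
  have hxx : ∑ i, ∑ j, Q i j * pd (ex i) (pd (ex j) (fun w : Pt N => w.2 ^ s * u w)) z
      = z.2 ^ s * ∑ i, ∑ j, Q i j * pd (ex i) (pd (ex j) u) z := by
    simp only [Finset.mul_sum]
    refine Finset.sum_congr rfl fun i _ => Finset.sum_congr rfl fun j _ => ?_
    simp only [pd_pd_snd_rpow_mul s hu hz, ex_snd]
    ring
  have hxy : ∑ i, q i * (pd (ex i) (pd ey (fun w : Pt N => w.2 ^ s * u w)) z
        + pd ey (pd (ex i) (fun w : Pt N => w.2 ^ s * u w)) z)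
      = z.2 ^ s * (∑ i, q i * (pd (ex i) (pd ey u) z + pd ey (pd (ex i) u) z)
        + 2 * s / z.2 * ∑ i, q i * pd (ex i) u z) := by
    simp only [mul_add, Finset.mul_sum, ← Finset.sum_add_distrib]
    refine Finset.sum_congr rfl fun i _ => ?_
    simp only [pd_pd_snd_rpow_mul s hu hz, ex_snd, ey_snd]
    ring
  rw [trHess_blockA, trHess_blockA, hxx, hxy, pd_pd_snd_rpow_mul s hu hz, ey_snd]
  ring

lemma sum_pd_snd_rpow_mul (d : Fin N → ℝ) (c : ℝ) (hu : DifferentiableAt ℝ u z) (hz : 0 < z.2) :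
    ∑ i, d i * pd (ex i) (fun w : Pt N => w.2 ^ s * u w) z
        + c * pd ey (fun w : Pt N => w.2 ^ s * u w) z
      = z.2 ^ s * (∑ i, d i * pd (ex i) u z + c * pd ey u z + c * s / z.2 * u z) := by
  have hx : ∑ i, d i * pd (ex i) (fun w : Pt N => w.2 ^ s * u w) z
      = z.2 ^ s * ∑ i, d i * pd (ex i) u z := by
    rw [Finset.mul_sum]
    refine Finset.sum_congr rfl fun i _ => ?_
    simp only [pd_snd_rpow_mul s hz hu, ex_snd]
    ring
  rw [hx, pd_snd_rpow_mul s hz hu, ey_snd]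
  ring

end

lemma sub_two_mul_mul_eq {γ c D s₁ : ℝ} (hγ : γ ≠ 0) (hs₁ : s₁ = (c / γ - 1) / 2 - Real.sqrt D) :
    c - 2 * s₁ * γ = γ * (1 + 2 * Real.sqrt D) := by
  subst hs₁
  field_simp
  ring

lemma indicial_eq_zero {γ b c D s₁ : ℝ} (hγ : γ ≠ 0) (hD : D = b / γ + ((c / γ - 1) / 2) ^ 2)
    (hDpos : 0 ≤ D) (hs₁ : s₁ = (c / γ - 1) / 2 - Real.sqrt D) :
    γ * s₁ * (s₁ + 1) - c * s₁ - b = 0 := by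
  have hsq : Real.sqrt D ^ 2 = b / γ + ((c / γ - 1) / 2) ^ 2 := hD ▸ Real.sq_sqrt hDpos
  subst hs₁
  field_simp at hsq ⊢
  linear_combination hsq

theorem statement4_general (N : ℕ)
    (Q : Matrix (Fin N) (Fin N) ℝ) (q d : Fin N → ℝ) (γ : ℝ) (hγ : 0 < γ)
    (b c : ℝ) (D s₁ : ℝ) (hD : D = b / γ + ((c / γ - 1) / 2) ^ 2) (hDpos : 0 ≤ D)
    (hs₁ : s₁ = (c / γ - 1) / 2 - Real.sqrt D) :
    (∀ α : ℝ, ∀ u : Pt N → ℝ, ContDiffOn ℝ 2 u {z : Pt N | 0 < z.2} →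
      ∀ z : Pt N, 0 < z.2 →
        z.2 ^ α * trHess (blockA Q q γ) (fun w : Pt N => w.2 ^ (-s₁) * u w) z
          + z.2 ^ (α - 1) *
              ((∑ i, d i * pd (ex i) (fun w : Pt N => w.2 ^ (-s₁) * u w) z)
                + c * pd ey (fun w : Pt N => w.2 ^ (-s₁) * u w) z)
          - b * z.2 ^ (α - 2) * (z.2 ^ (-s₁) * u z)
        = z.2 ^ (-s₁) *
            (z.2 ^ α * trHess (blockA Q q γ) u z
              + z.2 ^ (α - 1) *
                  ((∑ i, (d i - 2 * s₁ * q i) * pd (ex i) u z)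
                    + (c - 2 * s₁ * γ) * pd ey u z))) ∧
    c - 2 * s₁ * γ = γ * (1 + 2 * Real.sqrt D) := by
  refine ⟨fun α u hu z hz => ?_, sub_two_mul_mul_eq hγ.ne' hs₁⟩
  have hdu : DifferentiableAt ℝ u z :=
    (hu.differentiableOn (by norm_num)).differentiableAt (isOpen_upperHalfSpace.mem_nhds hz)
  have hw : ∑ i, (d i - 2 * s₁ * q i) * pd (ex i) u z
      = ∑ i, d i * pd (ex i) u z - 2 * s₁ * ∑ i, q i * pd (ex i) u z := by
    simp only [sub_mul, Finset.sum_sub_distrib, mul_assoc, Finset.mul_sum]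
  rw [trHess_blockA_snd_rpow_mul (-s₁) Q q γ hu hz, sum_pd_snd_rpow_mul (-s₁) d c hdu hz, hw,
    rpow_sub_one hz.ne', rpow_sub hz, rpow_two]
  field_simp
  linear_combination u z * indicial_eq_zero hγ.ne' hD hDpos hs₁

/-- The multiplication `u ↦ y^{−s₁} u` intertwines
`y^α Tr(A D²·) + y^{α-1} v·∇· − b y^{α-2}·` with
`y^α Tr(A D²·) + y^{α-1} w·∇·`, where `w = v − 2s₁(q, γ)`;
moreover `c − 2s₁γ = γ(1 + 2√D)`. -/
theorem statement4 (N : ℕ) (hN : 1 ≤ N)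
    (Q : Matrix (Fin N) (Fin N) ℝ) (hQ : Q.IsSymm) (q d : Fin N → ℝ) (γ : ℝ) (hγ : 0 < γ)
    (b c : ℝ) (D s₁ : ℝ) (hD : D = b / γ + ((c / γ - 1) / 2) ^ 2) (hDpos : 0 ≤ D)
    (hs₁ : s₁ = (c / γ - 1) / 2 - Real.sqrt D) :
    (∀ α : ℝ, ∀ u : Pt N → ℝ, ContDiffOn ℝ 2 u {z : Pt N | 0 < z.2} →
      ∀ z : Pt N, 0 < z.2 →
        z.2 ^ α * trHess (blockA Q q γ) (fun w : Pt N => w.2 ^ (-s₁) * u w) z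
          + z.2 ^ (α - 1) *
              ((∑ i, d i * pd (ex i) (fun w : Pt N => w.2 ^ (-s₁) * u w) z)
                + c * pd ey (fun w : Pt N => w.2 ^ (-s₁) * u w) z)
          - b * z.2 ^ (α - 2) * (z.2 ^ (-s₁) * u z)
        = z.2 ^ (-s₁) *
            (z.2 ^ α * trHess (blockA Q q γ) u z
              + z.2 ^ (α - 1) *
                  ((∑ i, (d i - 2 * s₁ * q i) * pd (ex i) u z)
                    + (c - 2 * s₁ * γ) * pd ey u z))) ∧
    c - 2 * s₁ * γ = γ * (1 + 2 * Real.sqrt D) :=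
  statement4_general N Q q d γ hγ b c D s₁ hD hDpos hs₁
end
end

section
/- Let N ≥ 1, let Q be a real symmetric N×N matrix, q, d ∈ ℝ^N, γ, c, b ∈ ℝ, α₁, α₂ ∈ ℝ, and let k, β ∈ ℝ with β ≠ −1. Let ℒ be the operator with parameters (Q, q, γ, d, c, b, α₁, α₂), and let ℒ̃ be the operator of the same form with parameters α̃₁ := α₁/(β+1), α̃₂ := (α₂+2β)/(β+1), the same Q, and q̃ := (β+1)q, γ̃ := (β+1)²γ, d̃ := 2kq + d, c̃ := (β+1)(c + (2k+β)γ), b̃ := b − k(c + (k−1)γ). Then for every u ∈ C²(ℝ^{N+1}_+) and every point of ℝ^{N+1}_+ one has ℒ(T_{k,β}u) = T_{k,β}(ℒ̃u). -/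
open MeasureTheory Real

noncomputable section

/-- The map `T_{k,β} u (x, y) = |β+1|^{1/p} y^k u(x, y^{β+1})`. -/
def Tkb (N : ℕ) (p k β : ℝ) (u : Pt N → ℝ) : Pt N → ℝ := fun z =>
  |β + 1| ^ (1 / p) * z.2 ^ k * u (z.1, z.2 ^ (β + 1))

/-- The degenerate operator
`ℒu = y^{α₁} Tr(Q D²_x u) + 2 y^{(α₁+α₂)/2} q·∇_x(∂_y u) + γ y^{α₂} ∂²_{yy} u
      + y^{(α₁+α₂)/2−1} d·∇_x u + c y^{α₂−1} ∂_y u − b y^{α₂−2} u`. -/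
def opL {N : ℕ} (Q : Matrix (Fin N) (Fin N) ℝ) (q d : Fin N → ℝ) (γ c b α₁ α₂ : ℝ)
    (u : Pt N → ℝ) (z : Pt N) : ℝ :=
  z.2 ^ α₁ * (∑ i, ∑ j, Q i j * pd (ex i) (pd (ex j) u) z)
    + 2 * z.2 ^ ((α₁ + α₂) / 2) * (∑ i, q i * pd (ex i) (pd ey u) z)
    + γ * z.2 ^ α₂ * pd ey (pd ey u) z
    + z.2 ^ ((α₁ + α₂) / 2 - 1) * (∑ i, d i * pd (ex i) u z)
    + c * z.2 ^ (α₂ - 1) * pd ey u z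
    - b * z.2 ^ (α₂ - 2) * u z

/-!
Functions of the form `a y^m g(x, y^s)` are stable under `∂_{x_i}` and `∂_y`: the chain rule gives
`∂_{x_i}` ↦ `a y^m (∂_{x_i} g)(x, y^s)` and
`∂_y` ↦ `a s y^{m+s-1} (∂_y g)(x, y^s) + a m y^{m-1} g(x, y^s)`.
Since `T_{k,β} u` has this form, every term of `ℒ (T_{k,β} u)` is again of this form in the
derivatives of `u`, evaluated at `(x, y^{β+1})`. Collecting terms and using
`(y^{β+1})^{e/(β+1)} = y^e` identifies the coefficients with those of `ℒ̃`.
-/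

lemma rpow_rpow_div_cancel {y : ℝ} (hy : 0 < y) {s : ℝ} (hs : s ≠ 0) (e : ℝ) :
    (y ^ s) ^ (e / s) = y ^ e := by
  rw [← rpow_mul hy.le, mul_div_cancel₀ e hs]

lemma sum_mul_left_comm {ι : Type*} (s : Finset ι) (f g : ι → ℝ) (a : ℝ) :
    ∑ i ∈ s, f i * (a * g i) = a * ∑ i ∈ s, f i * g i := by
  rw [Finset.mul_sum]
  exact Finset.sum_congr rfl fun i _ => mul_left_comm (f i) a (g i)

section WeightedPullback

variable {N : ℕ}

def upperHalf (N : ℕ) : Set (Pt N) := {z | 0 < z.2}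

lemma isOpen_upperHalf : IsOpen (upperHalf N) := isOpen_lt continuous_const continuous_snd

lemma DifferentiableOn.differentiableAt_of_mem_upperHalf {f : Pt N → ℝ} {z : Pt N}
    (hf : DifferentiableOn ℝ f (upperHalf N)) (hz : z ∈ upperHalf N) :
    DifferentiableAt ℝ f z :=
  hf.differentiableAt (isOpen_upperHalf.mem_nhds hz)

lemma ContDiffOn.differentiableOn_pd {f : Pt N → ℝ} (hf : ContDiffOn ℝ 2 f (upperHalf N))
    (v : Pt N) : DifferentiableOn ℝ (pd v f) (upperHalf N) :=
  ((hf.fderiv_of_isOpen isOpen_upperHalf (by norm_num)).clm_apply contDiffOn_const).differentiableOn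
    one_ne_zero

lemma pd_congr_of_eqOn {f g : Pt N → ℝ} {z : Pt N} (v : Pt N) (h : Set.EqOn f g (upperHalf N))
    (hz : z ∈ upperHalf N) : pd v f z = pd v g z := by
  rw [pd, pd, (Filter.eventuallyEq_of_mem (isOpen_upperHalf.mem_nhds hz) h).fderiv_eq]

lemma pd_add {f g : Pt N → ℝ} {z : Pt N} (v : Pt N) (hf : DifferentiableAt ℝ f z)
    (hg : DifferentiableAt ℝ g z) : pd v (f + g) z = pd v f z + pd v g z := by
  rw [pd, fderiv_add hf hg]
  rfl

def powSnd (s : ℝ) (z : Pt N) : Pt N := (z.1, z.2 ^ s)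

lemma powSnd_mem_upperHalf (s : ℝ) {z : Pt N} (hz : z ∈ upperHalf N) :
    powSnd s z ∈ upperHalf N :=
  rpow_pos_of_pos hz s

lemma hasFDerivAt_powSnd (s : ℝ) {z : Pt N} (hz : z ∈ upperHalf N) :
    HasFDerivAt (powSnd s)
      ((ContinuousLinearMap.fst ℝ _ ℝ).prod
        ((s * z.2 ^ (s - 1)) • ContinuousLinearMap.snd ℝ (Fin N → ℝ) ℝ)) z :=
  hasFDerivAt_fst.prodMk
    ((hasDerivAt_rpow_const (Or.inl (ne_of_gt hz))).comp_hasFDerivAt z hasFDerivAt_snd)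

def weightedPullback (a m s : ℝ) (g : Pt N → ℝ) (z : Pt N) : ℝ :=
  a * z.2 ^ m * g (powSnd s z)

variable {a m s : ℝ} {g : Pt N → ℝ} {z : Pt N}

lemma Tkb_eq_weightedPullback (p k β : ℝ) (u : Pt N → ℝ) :
    Tkb N p k β u = weightedPullback (|β + 1| ^ (1 / p)) k (β + 1) u :=
  rfl

lemma hasFDerivAt_weightedPullback (hg : DifferentiableOn ℝ g (upperHalf N))
    (hz : z ∈ upperHalf N) :
    HasFDerivAt (weightedPullback a m s g)
      ((a * z.2 ^ m) • (fderiv ℝ g (powSnd s z)).comp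
          ((ContinuousLinearMap.fst ℝ _ ℝ).prod
            ((s * z.2 ^ (s - 1)) • ContinuousLinearMap.snd ℝ (Fin N → ℝ) ℝ))
        + g (powSnd s z) • a • (m * z.2 ^ (m - 1)) • ContinuousLinearMap.snd ℝ _ ℝ) z := by
  have hpow : HasFDerivAt (fun w : Pt N => w.2 ^ m)
      ((m * z.2 ^ (m - 1)) • ContinuousLinearMap.snd ℝ (Fin N → ℝ) ℝ) z :=
    (hasDerivAt_rpow_const (Or.inl (ne_of_gt hz))).comp_hasFDerivAt z hasFDerivAt_snd
  have hg' := hg.differentiableAt_of_mem_upperHalf (powSnd_mem_upperHalf s hz)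
  exact (hpow.const_mul a).mul (hg'.hasFDerivAt.comp z (hasFDerivAt_powSnd s hz))

lemma DifferentiableOn.weightedPullback (hg : DifferentiableOn ℝ g (upperHalf N)) :
    DifferentiableOn ℝ (weightedPullback a m s g) (upperHalf N) := fun _ hz =>
  (hasFDerivAt_weightedPullback hg hz).differentiableAt.differentiableWithinAt

lemma pd_weightedPullback (v : Pt N) (hg : DifferentiableOn ℝ g (upperHalf N))
    (hz : z ∈ upperHalf N) :
    pd v (weightedPullback a m s g) z
      = a * z.2 ^ m * pd (v.1, s * z.2 ^ (s - 1) * v.2) g (powSnd s z)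
        + a * m * z.2 ^ (m - 1) * v.2 * g (powSnd s z) := by
  rw [pd, (hasFDerivAt_weightedPullback hg hz).fderiv, pd]
  simp only [add_apply, smul_apply, ContinuousLinearMap.comp_apply,
    ContinuousLinearMap.prod_apply, ContinuousLinearMap.coe_fst', ContinuousLinearMap.coe_snd',
    smul_eq_mul]
  ring

lemma pd_ex_weightedPullback (i : Fin N) (hg : DifferentiableOn ℝ g (upperHalf N))
    (hz : z ∈ upperHalf N) :
    pd (ex i) (weightedPullback a m s g) z = weightedPullback a m s (pd (ex i) g) z := by
  simp [pd_weightedPullback _ hg hz, weightedPullback, ex]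

lemma pd_ey_weightedPullback (hg : DifferentiableOn ℝ g (upperHalf N))
    (hz : z ∈ upperHalf N) :
    pd ey (weightedPullback a m s g) z
      = weightedPullback (a * s) (m + (s - 1)) s (pd ey g) z
        + weightedPullback (a * m) (m - 1) s g z := by
  have hv : ((ey : Pt N).1, s * z.2 ^ (s - 1) * (ey : Pt N).2) = (s * z.2 ^ (s - 1)) • ey := by
    simp [ey]
  rw [pd_weightedPullback _ hg hz, hv, pd, map_smul, ← pd, smul_eq_mul]
  simp only [weightedPullback, ey, rpow_add hz]
  ring

lemma pd_pd_ex_weightedPullback (v : Pt N) (i : Fin N) (hg : DifferentiableOn ℝ g (upperHalf N))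
    (hz : z ∈ upperHalf N) :
    pd v (pd (ex i) (weightedPullback a m s g)) z
      = pd v (weightedPullback a m s (pd (ex i) g)) z :=
  pd_congr_of_eqOn v (fun _ hw => pd_ex_weightedPullback i hg hw) hz

lemma pd_pd_ey_weightedPullback (v : Pt N) (hg : ContDiffOn ℝ 2 g (upperHalf N))
    (hz : z ∈ upperHalf N) :
    pd v (pd ey (weightedPullback a m s g)) z
      = pd v (weightedPullback (a * s) (m + (s - 1)) s (pd ey g)) z
        + pd v (weightedPullback (a * m) (m - 1) s g) z := by
  have hg₁ : DifferentiableOn ℝ g (upperHalf N) := hg.differentiableOn (by norm_num)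
  rw [pd_congr_of_eqOn v (g := weightedPullback (a * s) (m + (s - 1)) s (pd ey g)
    + weightedPullback (a * m) (m - 1) s g) (fun _ hw => pd_ey_weightedPullback hg₁ hw) hz]
  exact pd_add v ((hg.differentiableOn_pd ey).weightedPullback.differentiableAt_of_mem_upperHalf hz)
    (hg₁.weightedPullback.differentiableAt_of_mem_upperHalf hz)

end WeightedPullback

theorem statement7_general (N : ℕ)
    (Q : Matrix (Fin N) (Fin N) ℝ) (q d : Fin N → ℝ)
    (γ c b α₁ α₂ k β p : ℝ) (hβ : β ≠ -1)
    (u : Pt N → ℝ) (hu : ContDiffOn ℝ 2 u {z : Pt N | 0 < z.2}) :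
    ∀ z : Pt N, 0 < z.2 →
      opL Q q d γ c b α₁ α₂ (Tkb N p k β u) z
        = Tkb N p k β
            (opL Q (fun i => (β + 1) * q i) (fun i => 2 * k * q i + d i)
              ((β + 1) ^ 2 * γ) ((β + 1) * (c + (2 * k + β) * γ))
              (b - k * (c + (k - 1) * γ))
              (α₁ / (β + 1)) ((α₂ + 2 * β) / (β + 1)) u) z := by
  intro z hz
  have hs : β + 1 ≠ 0 := fun h => hβ (eq_neg_of_add_eq_zero_left h)
  have hz' : z ∈ upperHalf N := hz
  have hu₁ : DifferentiableOn ℝ u (upperHalf N) := hu.differentiableOn (by norm_num)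
  -- the exponents of `ℒ̃` in the form `e / (β + 1)`, for `rpow_rpow_div_cancel`
  have e₁ : (α₁ / (β + 1) + (α₂ + 2 * β) / (β + 1)) / 2 = ((α₁ + α₂) / 2 + β) / (β + 1) := by
    ring
  have e₂ : ((α₁ + α₂) / 2 + β) / (β + 1) - 1 = ((α₁ + α₂) / 2 - 1) / (β + 1) := by
    field_simp; ring
  have e₃ : (α₂ + 2 * β) / (β + 1) - 1 = (α₂ - 1 + β) / (β + 1) := by field_simp; ring
  have e₄ : (α₂ + 2 * β) / (β + 1) - 2 = (α₂ - 2) / (β + 1) := by field_simp; ring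
  rw [Tkb_eq_weightedPullback, Tkb_eq_weightedPullback]
  simp only [opL, pd_pd_ex_weightedPullback _ _ hu₁ hz', pd_pd_ey_weightedPullback _ hu hz',
    pd_ex_weightedPullback _ hu₁ hz', pd_ey_weightedPullback hu₁ hz',
    pd_ex_weightedPullback _ (hu.differentiableOn_pd _) hz',
    pd_ey_weightedPullback (hu.differentiableOn_pd _) hz', weightedPullback, powSnd,
    e₁, e₂, e₃, e₄, rpow_rpow_div_cancel hz hs]
  simp only [mul_add, add_mul, Finset.sum_add_distrib, mul_assoc, sum_mul_left_comm,
    ← Finset.mul_sum]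
  simp only [rpow_add hz, rpow_sub hz, rpow_one, rpow_two, two_mul]
  field_simp
  ring

/-- Conjugation of the degenerate operator by `T_{k,β}`:
`ℒ(T_{k,β} u) = T_{k,β}(ℒ̃ u)` where `ℒ̃` has parameters
`α̃₁ = α₁/(β+1)`, `α̃₂ = (α₂+2β)/(β+1)`, `q̃ = (β+1)q`, `γ̃ = (β+1)²γ`,
`d̃ = 2kq + d`, `c̃ = (β+1)(c + (2k+β)γ)`, `b̃ = b − k(c + (k−1)γ)`. -/
theorem statement7 (N : ℕ) (hN : 1 ≤ N)
    (Q : Matrix (Fin N) (Fin N) ℝ) (hQ : Q.IsSymm) (q d : Fin N → ℝ)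
    (γ c b α₁ α₂ k β p : ℝ) (hβ : β ≠ -1) (hp1 : 1 ≤ p)
    (u : Pt N → ℝ) (hu : ContDiffOn ℝ 2 u {z : Pt N | 0 < z.2}) :
    ∀ z : Pt N, 0 < z.2 →
      opL Q q d γ c b α₁ α₂ (Tkb N p k β u) z
        = Tkb N p k β
            (opL Q (fun i => (β + 1) * q i) (fun i => 2 * k * q i + d i)
              ((β + 1) ^ 2 * γ) ((β + 1) * (c + (2 * k + β) * γ))
              (b - k * (c + (k - 1) * γ))
              (α₁ / (β + 1)) ((α₂ + 2 * β) / (β + 1)) u) z :=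
  statement7_general N Q q d γ c b α₁ α₂ k β p hβ u hu
end
end

section
/- Let N ≥ 1, c ∈ ℝ with c ≠ 0, d ∈ ℝ^N, and α₁, α₂ ∈ ℝ with α₂ − α₁ ≠ 2. Set β := (α₁−α₂)/2 and ω := −d/(c(β+1)). Then for every u ∈ C²(ℝ^{N+1}_+) and every (x,y) ∈ ℝ^{N+1}_+, one has y^{(α₁+α₂)/2−1} d·∇_x(S_{β,ω}u)(x,y) + c y^{α₂−1} ∂_y(S_{β,ω}u)(x,y) = S_{β,ω}( c y^{α₂−1} ∂_y u )(x,y). -/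
open MeasureTheory Real

noncomputable section

/-- The map `S_{β,ω} u (x, y) = u(x + ω y^{β+1}, y)`. -/
def Sbo {N : ℕ} (β : ℝ) (ω : Fin N → ℝ) (u : Pt N → ℝ) : Pt N → ℝ := fun z =>
  u (z.1 + z.2 ^ (β + 1) • ω, z.2)

/-!
`S_{β,ω} u = u ∘ Φ` with the shear `Φ(x, y) = (x + y^{β+1} ω, y)`, so by the chain rule the
`x`-derivatives of `S_{β,ω} u` are those of `u` at `Φ(x, y)`, while
`∂_y (S_{β,ω} u) = (β + 1) y^β ω · ∇_x u + ∂_y u` at `Φ(x, y)`. The choice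
`ω = −d / (c (β + 1))` makes `c y^{α₂−1}` times the first term equal to
`−y^{(α₁+α₂)/2−1} d · ∇_x u`, cancelling the oblique part.
-/

section Shear

variable {E : Type*} [NormedAddCommGroup E] [NormedSpace ℝ E]

def shear (β : ℝ) (ω : E) (z : E × ℝ) : E × ℝ := (z.1 + z.2 ^ (β + 1) • ω, z.2)

theorem hasFDerivAt_shear (β : ℝ) (ω : E) {z : E × ℝ} (hz : z.2 ≠ 0) :
    HasFDerivAt (shear β ω)
      ((ContinuousLinearMap.fst ℝ E ℝ +
          (((β + 1) * z.2 ^ β) • ContinuousLinearMap.snd ℝ E ℝ).smulRight ω).prod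
        (ContinuousLinearMap.snd ℝ E ℝ)) z := by
  have hpow : HasDerivAt (fun t : ℝ => t ^ (β + 1)) ((β + 1) * z.2 ^ β) z.2 := by
    simpa using Real.hasDerivAt_rpow_const (p := β + 1) (Or.inl hz)
  exact (hasFDerivAt_fst.add ((hpow.comp_hasFDerivAt z hasFDerivAt_snd).smul_const ω)).prodMk
    hasFDerivAt_snd

end Shear

theorem Sbo_eq_comp {N : ℕ} (β : ℝ) (ω : Fin N → ℝ) (u : Pt N → ℝ) :
    Sbo β ω u = u ∘ shear β ω := rfl

theorem pd_Sbo {N : ℕ} (β : ℝ) (ω : Fin N → ℝ) {u : Pt N → ℝ} {z : Pt N} (hz : z.2 ≠ 0)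
    (hu : DifferentiableAt ℝ u (shear β ω z)) (v : Pt N) :
    pd v (Sbo β ω u) z = pd (v.1 + ((β + 1) * z.2 ^ β * v.2) • ω, v.2) u (shear β ω z) := by
  rw [pd, pd, Sbo_eq_comp, (hu.hasFDerivAt.comp z (hasFDerivAt_shear β ω hz)).fderiv]
  simp [mul_smul]

theorem sum_smul_ex {N : ℕ} (d : Fin N → ℝ) : ∑ i, d i • ex i = ((d, 0) : Pt N) := by
  ext j
  · simp [ex, Prod.fst_sum, Pi.single_apply]
  · simp [ex, Prod.snd_sum]

theorem sum_mul_pd_ex {N : ℕ} (d : Fin N → ℝ) (u : Pt N → ℝ) (z : Pt N) :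
    ∑ i, d i * pd (ex i) u z = pd (d, 0) u z := by
  simp only [pd, ← sum_smul_ex, map_sum, map_smul, smul_eq_mul]

theorem statement15_general (N : ℕ) (c : ℝ) (hc : c ≠ 0) (d : Fin N → ℝ)
    (α₁ α₂ : ℝ) (hα : α₂ - α₁ ≠ 2)
    (β : ℝ) (hβ : β = (α₁ - α₂) / 2) (ω : Fin N → ℝ)
    (hω : ω = fun i => -d i / (c * (β + 1)))
    (u : Pt N → ℝ) (hu : ContDiffOn ℝ 2 u {z : Pt N | 0 < z.2}) :
    ∀ z : Pt N, 0 < z.2 →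
      z.2 ^ ((α₁ + α₂) / 2 - 1) * (∑ i, d i * pd (ex i) (Sbo β ω u) z)
          + c * z.2 ^ (α₂ - 1) * pd ey (Sbo β ω u) z
        = Sbo β ω (fun w => c * w.2 ^ (α₂ - 1) * pd ey u w) z := by
  intro z hz
  have hβ1 : β + 1 ≠ 0 := by
    rw [hβ]; contrapose! hα; linarith
  have hdiff : DifferentiableAt ℝ u (shear β ω z) :=
    (hu.differentiableOn (by norm_num)).differentiableAt
      ((isOpen_lt continuous_const continuous_snd).mem_nhds hz)
  have htangent :
      ((((β + 1) * z.2 ^ β) • ω, 1) : Pt N) = (-(z.2 ^ β / c)) • (d, 0) + (0, 1) := by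
    ext i
    · simp only [hω, Prod.fst_add, Prod.smul_fst, Pi.add_apply, Pi.smul_apply, smul_eq_mul,
        Pi.zero_apply, add_zero]
      field_simp
    · simp
  have hexp : z.2 ^ ((α₁ + α₂) / 2 - 1) = z.2 ^ (α₂ - 1) * z.2 ^ β := by
    rw [← Real.rpow_add hz, hβ]; ring_nf
  rw [sum_mul_pd_ex, pd_Sbo β ω hz.ne' hdiff, pd_Sbo β ω hz.ne' hdiff, Sbo_eq_comp,
    Function.comp_apply]
  simp only [ey, shear, zero_add, mul_zero, zero_smul, add_zero, mul_one, htangent, pd, map_add,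
    map_smul, smul_eq_mul, hexp]
  field_simp
  ring

/-- With `β = (α₁−α₂)/2` and `ω = −d/(c(β+1))`, the oblique
derivative transforms under `S_{β,ω}` into a pure Neumann derivative:
`y^{(α₁+α₂)/2−1} d·∇_x(S_{β,ω}u) + c y^{α₂−1} ∂_y(S_{β,ω}u) = S_{β,ω}(c y^{α₂−1} ∂_y u)`. -/
theorem statement15 (N : ℕ) (hN : 1 ≤ N) (c : ℝ) (hc : c ≠ 0) (d : Fin N → ℝ)
    (α₁ α₂ : ℝ) (hα : α₂ - α₁ ≠ 2)
    (β : ℝ) (hβ : β = (α₁ - α₂) / 2) (ω : Fin N → ℝ)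
    (hω : ω = fun i => -d i / (c * (β + 1)))
    (u : Pt N → ℝ) (hu : ContDiffOn ℝ 2 u {z : Pt N | 0 < z.2}) :
    ∀ z : Pt N, 0 < z.2 →
      z.2 ^ ((α₁ + α₂) / 2 - 1) * (∑ i, d i * pd (ex i) (Sbo β ω u) z)
          + c * z.2 ^ (α₂ - 1) * pd ey (Sbo β ω u) z
        = Sbo β ω (fun w => c * w.2 ^ (α₂ - 1) * pd ey u w) z :=
  statement15_general N c hc d α₁ α₂ hα β hβ ω hω u hu
end
end
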